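/- Let b : ℕ² → ℂ be bounded and suppose that c := lim_{N→∞} 𝔼_{1≤m,n≤N, gcd(m,n)=1} b(dm, dn) exists for every d ≥ 1 with values c_d satisfying |c_d| ≤ sup|b|. Then lim_{N→∞} 𝔼_{1≤m,n≤N} b(m,n) exists and equals (6/π²) ∑_{d=1}^∞ c_d/d². -/

import Mathlib

/-!
Sorting the pairs `(m, n) ∈ [1, N]²` by `d = gcd(m, n)` gives
`∑_{[1, N]²} b = ∑_{d ≤ N} S_d(⌊N / d⌋)`, where `S_d(M)` sums `b(d m, d n)` over the coprime pairs
of `[1, M]²`. Since coprime pairs have density `6 / π²`, the hypothesis gives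
`S_d(M) / M² → (6 / π²) c_d`, so the `d`-th term of `N⁻² ∑_d S_d(⌊N / d⌋)` tends to
`(6 / π²) c_d / d²`; as it is bounded by `B / d²`, dominated convergence exchanges limit and sum.
The density comes from the same exchange applied to the Möbius inversion
`#{coprime pairs in [1, N]²} = ∑_{d ≤ N} μ(d) ⌊N / d⌋²`, with `∑ μ(d) / d² = 1 / ζ(2) = 6 / π²`.
-/

open Filter Finset Topology ArithmeticFunction
open scoped ArithmeticFunction.Moebius ArithmeticFunction.zeta

def coprimePairs (N : ℕ) : Finset (ℕ × ℕ) :=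
  (Icc 1 N ×ˢ Icc 1 N).filter (fun p => Nat.gcd p.1 p.2 = 1)

theorem sum_divisors_moebius (n : ℕ) :
    ∑ d ∈ n.divisors, (μ d : ℤ) = if n = 1 then 1 else 0 := by
  rw [← coe_zeta_mul_apply, coe_zeta_mul_moebius, one_apply]

theorem card_filter_dvd_Icc (N d : ℕ) : #{m ∈ Icc 1 N | d ∣ m} = N / d := by
  rw [← Nat.Ioc_filter_dvd_card_eq_div N d]
  rfl

theorem card_coprimePairs_eq_sum_moebius (N : ℕ) :
    (#(coprimePairs N) : ℤ) = ∑ d ∈ Icc 1 N, μ d * ((N / d : ℕ) : ℤ) ^ 2 := by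
  have hind : ∀ p ∈ Icc 1 N ×ˢ Icc 1 N, (if Nat.gcd p.1 p.2 = 1 then (1 : ℤ) else 0) =
      ∑ d ∈ Icc 1 N, if d ∣ p.1 ∧ d ∣ p.2 then (μ d : ℤ) else 0 := by
    intro p hp
    simp only [mem_product, mem_Icc] at hp
    rw [← sum_divisors_moebius, ← sum_filter]
    refine sum_congr (ext fun d => ?_) fun _ _ => rfl
    simp only [Nat.mem_divisors, mem_filter, mem_Icc, Nat.dvd_gcd_iff]
    constructor
    · rintro ⟨⟨h1, h2⟩, -⟩
      exact ⟨⟨Nat.pos_of_dvd_of_pos h1 (by omega),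
        (Nat.le_of_dvd (by omega) h1).trans hp.1.2⟩, h1, h2⟩
    · rintro ⟨-, h1, h2⟩
      exact ⟨⟨h1, h2⟩, (Nat.gcd_pos_of_pos_left _ (by omega)).ne'⟩
  rw [coprimePairs, card_filter, Nat.cast_sum, sum_congr rfl fun p hp => by
    rw [Nat.cast_ite, Nat.cast_one, Nat.cast_zero, hind p hp], sum_comm]
  refine sum_congr rfl fun d _ => ?_
  rw [← sum_filter, sum_const, filter_product (d ∣ ·) (d ∣ ·), card_product,
    card_filter_dvd_Icc, nsmul_eq_mul]
  push_cast
  ring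

theorem card_coprimePairs_le (N : ℕ) : #(coprimePairs N) ≤ N ^ 2 :=
  (card_filter_le _ _).trans (by simp [sq])

theorem sum_Icc_Icc_eq_sum_coprimePairs {M : Type*} [AddCommMonoid M] (b : ℕ × ℕ → M)
    (N : ℕ) :
    ∑ m ∈ Icc 1 N, ∑ n ∈ Icc 1 N, b (m, n) =
      ∑ d ∈ Icc 1 N, ∑ p ∈ coprimePairs (N / d), b (d * p.1, d * p.2) := by
  have hgcd : ∀ p ∈ Icc 1 N ×ˢ Icc 1 N, Nat.gcd p.1 p.2 ∈ Icc 1 N := by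
    intro p hp
    simp only [mem_product, mem_Icc] at hp ⊢
    exact ⟨Nat.gcd_pos_of_pos_left _ (by omega), (Nat.gcd_le_left _ (by omega)).trans hp.1.2⟩
  rw [← sum_product' (f := fun m n => b (m, n)), ← sum_fiberwise_of_maps_to hgcd]
  refine sum_congr rfl fun d hd => ?_
  have hd : 0 < d := (mem_Icc.mp hd).1
  have hcancel : ∀ p ∈ {p ∈ Icc 1 N ×ˢ Icc 1 N | Nat.gcd p.1 p.2 = d},
      (d * (p.1 / d), d * (p.2 / d)) = p := by
    intro p hp
    have hg := (mem_filter.mp hp).2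
    rw [Nat.mul_div_cancel' (hg ▸ Nat.gcd_dvd_left _ _),
      Nat.mul_div_cancel' (hg ▸ Nat.gcd_dvd_right _ _)]
  refine sum_nbij' (fun p => (p.1 / d, p.2 / d)) (fun q => (d * q.1, d * q.2)) ?_ ?_
    hcancel (fun q _ => by simp [Nat.mul_div_cancel_left _ hd]) fun p hp => by rw [hcancel p hp]
  · intro p hp
    simp only [coprimePairs, mem_filter, mem_product, mem_Icc] at hp ⊢
    obtain ⟨⟨⟨h1, h1N⟩, h2, h2N⟩, hg⟩ := hp
    have hd1 : d ∣ p.1 := hg ▸ Nat.gcd_dvd_left _ _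
    have hd2 : d ∣ p.2 := hg ▸ Nat.gcd_dvd_right _ _
    refine ⟨⟨⟨Nat.div_pos (Nat.le_of_dvd h1 hd1) hd, Nat.div_le_div_right h1N⟩,
      Nat.div_pos (Nat.le_of_dvd h2 hd2) hd, Nat.div_le_div_right h2N⟩, ?_⟩
    simpa [hg] using Nat.coprime_div_gcd_div_gcd (m := p.1) (n := p.2) (hg ▸ hd)
  · intro q hq
    simp only [coprimePairs, mem_filter, mem_product, mem_Icc] at hq ⊢
    obtain ⟨⟨⟨h1, h1N⟩, h2, h2N⟩, hg⟩ := hq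
    have hle : ∀ k ≤ N / d, d * k ≤ N := fun k hk =>
      (Nat.mul_le_mul_left d hk).trans (Nat.mul_div_le N d)
    refine ⟨⟨⟨Nat.mul_pos hd h1, hle _ h1N⟩, Nat.mul_pos hd h2, hle _ h2N⟩, ?_⟩
    rw [Nat.gcd_mul_left, hg, mul_one]

theorem natDiv_sq_div_sq_le (N d : ℕ) :
    ((N / d : ℕ) : ℝ) ^ 2 / N ^ 2 ≤ 1 / (d : ℝ) ^ 2 := by
  rcases eq_or_ne N 0 with rfl | hN
  · simp
  calc ((N / d : ℕ) : ℝ) ^ 2 / N ^ 2 ≤ ((N : ℝ) / d) ^ 2 / N ^ 2 := by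
        gcongr; exact Nat.cast_div_le
    _ = 1 / (d : ℝ) ^ 2 := by field_simp

theorem tendsto_natDiv_div_self {d : ℕ} (hd : d ≠ 0) :
    Tendsto (fun N : ℕ => ((N / d : ℕ) : ℝ) / N) atTop (𝓝 (1 / d)) := by
  have hx : Tendsto (fun N : ℕ => (N : ℝ) / d) atTop atTop :=
    tendsto_natCast_atTop_atTop.atTop_div_const (by positivity)
  have := (tendsto_nat_floor_div_atTop.comp hx).div_const (d : ℝ)
  refine this.congr' ?_
  filter_upwards [eventually_ne_atTop 0] with N hN
  simp only [Function.comp_apply, Nat.floor_div_natCast, Nat.floor_natCast]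
  field_simp

theorem tendsto_sum_Icc_div_sq {u : ℕ → ℕ → ℂ} {L : ℕ → ℂ} {K : ℝ}
    (hu : ∀ d M, ‖u d M‖ ≤ K * M ^ 2)
    (hL : ∀ d, d ≠ 0 → Tendsto (fun M : ℕ => u d M / M ^ 2) atTop (𝓝 (L d))) :
    Tendsto (fun N : ℕ => (∑ d ∈ Icc 1 N, u d (N / d)) / N ^ 2) atTop
      (𝓝 (∑' d : ℕ, L d / d ^ 2)) := by
  have hK : 0 ≤ K := by simpa using (norm_nonneg _).trans (hu 0 1)
  let f : ℕ → ℕ → ℂ := fun N d => if d ∈ Icc 1 N then u d (N / d) / N ^ 2 else 0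
  have hf : ∀ N : ℕ, (∑ d ∈ Icc 1 N, u d (N / d)) / N ^ 2 = ∑' d, f N d := fun N => by
    rw [tsum_eq_sum (s := Icc 1 N) fun d hd => if_neg hd, sum_div]
    exact sum_congr rfl fun d hd => (if_pos hd).symm
  simp only [hf]
  refine tendsto_tsum_of_dominated_convergence (bound := fun d : ℕ => K * (1 / (d : ℝ) ^ 2))
    ((Real.summable_one_div_nat_pow.mpr one_lt_two).mul_left K) (fun d => ?_)
    (Eventually.of_forall fun N d => ?_)
  · rcases eq_or_ne d 0 with rfl | hd
    · simp [f]
    have hM := (hL d hd).comp (Nat.tendsto_div_const_atTop hd)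
    have hratio := (Complex.continuous_ofReal.tendsto _).comp (tendsto_natDiv_div_self hd)
    have hlim : L d * ((1 / d : ℝ) : ℂ) ^ 2 = L d / d ^ 2 := by push_cast; ring
    rw [← hlim]
    refine (hM.mul (hratio.pow 2)).congr' ?_
    filter_upwards [eventually_ge_atTop d] with N hdN
    have hNd : N / d ≠ 0 := (Nat.div_pos hdN (Nat.pos_of_ne_zero hd)).ne'
    have hN : N ≠ 0 := by omega
    simp only [f, Function.comp_apply, Complex.ofReal_div, Complex.ofReal_natCast,
      if_pos (mem_Icc.mpr ⟨Nat.one_le_iff_ne_zero.mpr hd, hdN⟩)]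
    field_simp
  · simp only [f]
    split_ifs
    · rw [norm_div, norm_pow, Complex.norm_natCast]
      calc ‖u d (N / d)‖ / (N : ℝ) ^ 2 ≤ K * ((N / d : ℕ) : ℝ) ^ 2 / N ^ 2 := by
            gcongr; exact hu _ _
        _ = K * (((N / d : ℕ) : ℝ) ^ 2 / N ^ 2) := mul_div_assoc _ _ _
        _ ≤ K * (1 / (d : ℝ) ^ 2) := mul_le_mul_of_nonneg_left (natDiv_sq_div_sq_le N d) hK
    · rw [norm_zero]; positivity

theorem tsum_moebius_div_sq : ∑' n : ℕ, (μ n : ℂ) / n ^ 2 = 6 / (Real.pi : ℂ) ^ 2 := by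
  have h2 : 1 < (2 : ℂ).re := by norm_num
  have hL := LSeries_zeta_mul_Lseries_moebius h2
  rw [LSeries_zeta_eq_riemannZeta h2, riemannZeta_two] at hL
  have hπ : (Real.pi : ℂ) ≠ 0 := Complex.ofReal_ne_zero.mpr Real.pi_ne_zero
  have : LSeries (fun n => (μ n : ℂ)) 2 = ∑' n : ℕ, (μ n : ℂ) / n ^ 2 := by
    refine tsum_congr fun n => ?_
    rw [LSeries.term_of_ne_zero' two_ne_zero, ← Nat.cast_ofNat, Complex.cpow_natCast]
  rw [← this]
  field_simp at hL ⊢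
  linear_combination hL

theorem tendsto_card_coprimePairs_div_sq :
    Tendsto (fun N : ℕ => (#(coprimePairs N) : ℂ) / N ^ 2) atTop
      (𝓝 (6 / (Real.pi : ℂ) ^ 2)) := by
  rw [← tsum_moebius_div_sq]
  refine (tendsto_sum_Icc_div_sq (u := fun d M => (μ d : ℂ) * M ^ 2) (K := 1)
    (fun d M => ?_) (fun d _ => ?_)).congr fun N => ?_
  · rw [norm_mul, norm_pow, Complex.norm_natCast, Complex.norm_intCast]
    gcongr
    exact_mod_cast abs_moebius_le_one
  · refine tendsto_const_nhds.congr' ?_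
    filter_upwards [eventually_ne_atTop 0] with M hM
    field_simp
  · rw [← Int.cast_natCast (#(coprimePairs N)), card_coprimePairs_eq_sum_moebius]
    push_cast
    rfl

theorem norm_sum_coprimePairs_le {f : ℕ × ℕ → ℂ} {B : ℝ} (hf : ∀ p, ‖f p‖ ≤ B) (M : ℕ) :
    ‖∑ p ∈ coprimePairs M, f p‖ ≤ B * M ^ 2 := by
  have hB : 0 ≤ B := (norm_nonneg _).trans (hf 0)
  calc ‖∑ p ∈ coprimePairs M, f p‖ ≤ ∑ _p ∈ coprimePairs M, B :=
        norm_sum_le_of_le _ fun p _ => hf p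
    _ = B * #(coprimePairs M) := by rw [sum_const, nsmul_eq_mul, mul_comm]
    _ ≤ B * M ^ 2 := by gcongr; exact_mod_cast card_coprimePairs_le M

theorem tendsto_sum_coprimePairs_div_sq {f : ℕ × ℕ → ℂ} {c : ℂ}
    (hf : Tendsto (fun M : ℕ => (∑ p ∈ coprimePairs M, f p) / #(coprimePairs M)) atTop
      (𝓝 c)) :
    Tendsto (fun M : ℕ => (∑ p ∈ coprimePairs M, f p) / M ^ 2) atTop
      (𝓝 (c * (6 / (Real.pi : ℂ) ^ 2))) := by
  refine (hf.mul tendsto_card_coprimePairs_div_sq).congr' ?_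
  filter_upwards [eventually_ge_atTop 1] with M hM
  have hcard : (#(coprimePairs M) : ℂ) ≠ 0 :=
    Nat.cast_ne_zero.mpr (card_ne_zero_of_mem (a := (1, 1)) (by simp [coprimePairs, hM]))
  exact div_mul_div_cancel₀ hcard

theorem stmt19_general (b : ℕ × ℕ → ℂ) (B : ℝ) (hb : ∀ p, ‖b p‖ ≤ B)
    (c : ℕ → ℂ)
    (h : ∀ d : ℕ, 1 ≤ d →
      Tendsto (fun N : ℕ =>
          (∑ p ∈ (Finset.Icc 1 N ×ˢ Finset.Icc 1 N).filter (fun p => Nat.gcd p.1 p.2 = 1),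
              b (d * p.1, d * p.2)) /
            (((Finset.Icc 1 N ×ˢ Finset.Icc 1 N).filter
                (fun p => Nat.gcd p.1 p.2 = 1)).card : ℂ))
        atTop (nhds (c d))) :
    Tendsto (fun N : ℕ =>
        (∑ m ∈ Finset.Icc 1 N, ∑ n ∈ Finset.Icc 1 N, b (m, n)) / (N : ℂ) ^ 2)
      atTop
      (nhds ((6 / (Real.pi : ℂ) ^ 2) * ∑' d : ℕ, c d / (d : ℂ) ^ 2)) := by
  have key := tendsto_sum_Icc_div_sq
    (u := fun d M => ∑ p ∈ coprimePairs M, b (d * p.1, d * p.2))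
    (fun d => norm_sum_coprimePairs_le (fun p => hb _))
    (fun d hd => tendsto_sum_coprimePairs_div_sq (h d (Nat.one_le_iff_ne_zero.mpr hd)))
  simp only [sum_Icc_Icc_eq_sum_coprimePairs b]
  convert key using 2
  rw [← tsum_mul_left]
  exact tsum_congr fun d => by ring

theorem stmt19 (b : ℕ × ℕ → ℂ) (B : ℝ) (hb : ∀ p, ‖b p‖ ≤ B)
    (c : ℕ → ℂ) (hc : ∀ d, ‖c d‖ ≤ B)
    (h : ∀ d : ℕ, 1 ≤ d →
      Tendsto (fun N : ℕ =>
          (∑ p ∈ (Finset.Icc 1 N ×ˢ Finset.Icc 1 N).filter (fun p => Nat.gcd p.1 p.2 = 1),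
              b (d * p.1, d * p.2)) /
            (((Finset.Icc 1 N ×ˢ Finset.Icc 1 N).filter
                (fun p => Nat.gcd p.1 p.2 = 1)).card : ℂ))
        atTop (nhds (c d))) :
    Tendsto (fun N : ℕ =>
        (∑ m ∈ Finset.Icc 1 N, ∑ n ∈ Finset.Icc 1 N, b (m, n)) / (N : ℂ) ^ 2)
      atTop
      (nhds ((6 / (Real.pi : ℂ) ^ 2) * ∑' d : ℕ, c d / (d : ℂ) ^ 2)) :=
  stmt19_general b B hb c h
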